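/- The map from SL₂(ℕ) to the positive rationals sending the matrix [[a,b],[c,d]] to (a+b)/(c+d) is a bijection. -/

import Mathlib

/-!
Write `p = a + b` and `q = c + d` for the row sums of `M = [[a, b], [c, d]] ∈ SL₂(ℕ)`. Then
`a * q - c * p = ad - bc = 1`, so `p / q` is already in lowest terms and the row sums are
recovered from the fraction. Conversely, for coprime `p, q > 0` the equation `a * q - c * p = 1`
has exactly one solution with `1 ≤ a ≤ p`, and that solution has `0 ≤ c < q`; it is the unique
matrix `[[a, p - a], [c, q - c]]` of `SL₂(ℕ)` with row sums `p, q`.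
-/

open Matrix

def SL2N : Set (Matrix (Fin 2) (Fin 2) ℤ) :=
  {M | (∀ i j, 0 ≤ M i j) ∧ M.det = 1}

def matToFrac (M : Matrix (Fin 2) (Fin 2) ℤ) : ℚ :=
  ((M 0 0 + M 0 1 : ℤ) : ℚ) / ((M 1 0 + M 1 1 : ℤ) : ℚ)

namespace Int

variable {p q a c : ℤ}

theorem eq_of_mul_sub_mul_eq_one {a' c' : ℤ} (ha : 1 ≤ a) (hap : a ≤ p) (ha' : 1 ≤ a')
    (hap' : a' ≤ p) (h : a * q - c * p = 1) (h' : a' * q - c' * p = 1) : a = a' ∧ c = c' := by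
  have hcop : IsCoprime p q := ⟨-c, a, by linarith⟩
  have hdvd : p ∣ a - a' := hcop.dvd_of_dvd_mul_right ⟨c - c', by linear_combination h - h'⟩
  have haa' : a = a' :=
    sub_eq_zero.mp <| Int.eq_zero_of_abs_lt_dvd hdvd (abs_sub_lt_iff.mpr ⟨by omega, by omega⟩)
  subst haa'
  exact ⟨rfl, mul_right_cancel₀ (by omega : p ≠ 0) (by linarith)⟩

theorem exists_mul_sub_mul_eq_one (hp : 0 < p) (h : IsCoprime p q) :
    ∃ a c, 1 ≤ a ∧ a ≤ p ∧ a * q - c * p = 1 := by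
  obtain ⟨u, v, huv⟩ := h
  -- shift the Bézout coefficient `v` by a multiple of `p` into `[1, p]`
  set k := (v - 1) / p
  have hrem : v - p * k - 1 = (v - 1) % p := by rw [Int.emod_def]; ring
  refine ⟨v - p * k, -u - q * k, ?_, ?_, by linear_combination huv⟩
  · linarith [Int.emod_nonneg (v - 1) hp.ne']
  · linarith [Int.emod_lt_of_pos (v - 1) hp]

theorem nonneg_and_lt_of_mul_sub_mul_eq_one (ha : 1 ≤ a) (hap : a ≤ p) (hq : 0 < q)
    (h : a * q - c * p = 1) : 0 ≤ c ∧ c < q := by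
  constructor <;> nlinarith

end Int

namespace SL2N

variable {M N : Matrix (Fin 2) (Fin 2) ℤ}

theorem det_eq_rowSums (hM : M ∈ SL2N) :
    M 0 0 * (M 1 0 + M 1 1) - M 1 0 * (M 0 0 + M 0 1) = 1 := by
  linear_combination (Matrix.det_fin_two M).symm.trans hM.2

theorem one_le_diag (hM : M ∈ SL2N) : 1 ≤ M 0 0 ∧ 1 ≤ M 1 1 := by
  have hdet : M 0 0 * M 1 1 = 1 + M 0 1 * M 1 0 := by
    linear_combination (Matrix.det_fin_two M).symm.trans hM.2
  have hbc := mul_nonneg (hM.1 0 1) (hM.1 1 0)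
  constructor <;> nlinarith [hM.1 0 0, hM.1 1 1]

theorem rowSums_pos (hM : M ∈ SL2N) : 0 < M 0 0 + M 0 1 ∧ 0 < M 1 0 + M 1 1 := by
  have := one_le_diag hM
  constructor <;> linarith [hM.1 0 1, hM.1 1 0]

theorem isCoprime_rowSums (hM : M ∈ SL2N) : IsCoprime (M 0 0 + M 0 1) (M 1 0 + M 1 1) :=
  ⟨-M 1 0, M 0 0, by linear_combination det_eq_rowSums hM⟩

theorem matToFrac_pos (hM : M ∈ SL2N) : 0 < matToFrac M := by
  obtain ⟨hp, hq⟩ := rowSums_pos hM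
  exact div_pos (by exact_mod_cast hp) (by exact_mod_cast hq)

theorem eq_of_rowSums_eq (hM : M ∈ SL2N) (hN : N ∈ SL2N)
    (hp : M 0 0 + M 0 1 = N 0 0 + N 0 1) (hq : M 1 0 + M 1 1 = N 1 0 + N 1 1) : M = N := by
  have hNdet := det_eq_rowSums hN
  rw [← hp, ← hq] at hNdet
  obtain ⟨ha, hc⟩ := Int.eq_of_mul_sub_mul_eq_one (one_le_diag hM).1
    (by linarith [hM.1 0 1]) (one_le_diag hN).1 (by linarith [hN.1 0 1]) (det_eq_rowSums hM) hNdet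
  ext i j
  fin_cases i <;> fin_cases j <;> simp only [Fin.zero_eta, Fin.mk_one] <;> omega

theorem exists_rowSums_eq {p q : ℤ} (hp : 0 < p) (hq : 0 < q) (h : IsCoprime p q) :
    ∃ M ∈ SL2N, M 0 0 + M 0 1 = p ∧ M 1 0 + M 1 1 = q := by
  obtain ⟨a, c, ha, hap, hdet⟩ := Int.exists_mul_sub_mul_eq_one hp h
  obtain ⟨hc, hcq⟩ := Int.nonneg_and_lt_of_mul_sub_mul_eq_one ha hap hq hdet
  refine ⟨!![a, p - a; c, q - c], ⟨fun i j => ?_, ?_⟩, by simp, by simp⟩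
  · fin_cases i <;> fin_cases j <;> simp <;> omega
  · rw [Matrix.det_fin_two_of]
    linear_combination hdet

end SL2N

/-- The map `SL₂(ℕ) → ℚ₊`, `[[a,b],[c,d]] ↦ (a+b)/(c+d)`, is a bijection
onto the set of positive rational numbers. -/
theorem SL2N_to_posRat_bijective : Set.BijOn matToFrac SL2N {q : ℚ | 0 < q} := by
  refine ⟨fun M hM => SL2N.matToFrac_pos hM, fun M hM N hN hMN => ?_, fun r hr => ?_⟩
  · have rowSums_coprime {M} (hM : M ∈ SL2N) :=
      Int.isCoprime_iff_gcd_eq_one.mp (SL2N.isCoprime_rowSums hM)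
    obtain ⟨hp, hq⟩ := Rat.div_int_inj (SL2N.rowSums_pos hM).2 (SL2N.rowSums_pos hN).2
      (rowSums_coprime hM) (rowSums_coprime hN) hMN
    exact SL2N.eq_of_rowSums_eq hM hN hp hq
  · obtain ⟨M, hM, hp, hq⟩ := SL2N.exists_rowSums_eq (Rat.num_pos.mpr hr)
      (by exact_mod_cast r.pos) r.isCoprime_num_den
    refine ⟨M, hM, ?_⟩
    rw [matToFrac, hp, hq, Int.cast_natCast]
    exact Rat.num_div_den r
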